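/- Let δ > 1, e ∈ [0,1), and ω ∈ ℂ with |ω| = 1. Then for every twice continuously differentiable y : [0,2π] → ℂ² with y(2π) = ω y(0), y′(2π) = ω y′(0), and y not identically zero, one has Re ∫₀^{2π} ⟨ −y″(θ) − 2J₂ y′(θ) + δ y(θ)/(1 + e cos θ), y(θ) ⟩ dθ > 0, where ⟨·,·⟩ is the Hermitian inner product on ℂ². That is, the operator −(d²/dθ²)I₂ − 2J₂ d/dθ + δ I₂/(1 + e cos θ) is strictly positive on D̄₂(ω,2π). -/

import Mathlib

open Real Matrix

noncomputable section

open ComplexConjugate MeasureTheory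

/-!
In the rotating frame `z = R(θ) y`, `R(θ) = exp (θ J₂)`, the operator becomes
`-d²/dθ² - 1 + δ/u` on each component, where `u = 1 + e cos θ > 0`. Since `-u'' - u + 1 = 0`,
`u` is a positive ground state of `-d²/dθ² - 1 + 1/u`, so Picone's identity with `r = u'/u` writes
`Re ⟨L y, y⟩` as the derivative of `∑ r |z|² - Re (z' z̄)` plus `∑ |z' - r z|² + (δ - 1)/u |z|²`.
The boundary conditions with `|ω| = 1` make the derivative integrate to zero, and the remaining
integrand is nonnegative and positive where `y ≠ 0`.
-/

theorem intervalIntegral_pos_of_continuous_of_nonneg {f : ℝ → ℝ} {a b x₀ : ℝ} (hab : a < b)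
    (hf : Continuous f) (hf0 : ∀ x, 0 ≤ f x) (hx₀ : x₀ ∈ Set.Icc a b) (hfx₀ : 0 < f x₀) :
    0 < ∫ x in a..b, f x := by
  rw [intervalIntegral.integral_pos_iff_support_of_nonneg_ae
    (Filter.Eventually.of_forall hf0) (hf.intervalIntegrable _ _)]
  have hU : IsOpen (Function.support f ∩ Set.Ioo a b) := hf.isOpen_support.inter isOpen_Ioo
  have hx₀' : x₀ ∈ closure (Set.Ioo a b) := by rwa [closure_Ioo hab.ne]
  obtain ⟨x, hx, hx'⟩ := mem_closure_iff.mp hx₀' _ hf.isOpen_support hfx₀.ne'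
  refine ⟨hab, (hU.measure_pos volume ⟨x, hx, hx'⟩).trans_le (measure_mono ?_)⟩
  exact Set.inter_subset_inter_right _ Set.Ioo_subset_Ioc_self

theorem intervalIntegral_eq_of_hasDerivAt_sub {f g Φ : ℝ → ℝ} {a b : ℝ} (hf : Continuous f)
    (hg : Continuous g) (hΦ : ∀ x, HasDerivAt Φ (f x - g x) x) (hΦab : Φ a = Φ b) :
    ∫ x in a..b, f x = ∫ x in a..b, g x := by
  have := intervalIntegral.integral_eq_sub_of_hasDerivAt (fun x _ => hΦ x)
    ((hf.sub hg).intervalIntegrable a b)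
  rw [intervalIntegral.integral_sub (hf.intervalIntegrable a b) (hg.intervalIntegrable a b),
    hΦab, sub_self] at this
  exact sub_eq_zero.mp this

theorem HasDerivAt.const_mulVec {m n : Type*} [Fintype n] {𝔸 : Type*} [NormedCommRing 𝔸]
    [NormedAlgebra ℝ 𝔸] (A : Matrix m n 𝔸) {y : ℝ → n → 𝔸} {y' : n → 𝔸} {t : ℝ}
    (hy : HasDerivAt y y' t) : HasDerivAt (fun s => A *ᵥ y s) (A *ᵥ y') t :=
  hasDerivAt_pi.mpr fun i => by
    simpa [mulVec, dotProduct] using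
      HasDerivAt.fun_sum fun j _ => (hasDerivAt_pi.mp hy j).const_mul (A i j)

theorem one_add_mul_cos_pos {e : ℝ} (he : |e| < 1) (θ : ℝ) : 0 < 1 + e * Real.cos θ := by
  have : |e * Real.cos θ| < 1 := by
    rw [abs_mul]; nlinarith [abs_nonneg e, Real.abs_cos_le_one θ, abs_nonneg (Real.cos θ)]
  linarith [neg_abs_le (e * Real.cos θ)]

local notation "J₂" => (!![0, -1; 1, 0] : Matrix (Fin 2) (Fin 2) ℂ)

namespace PlanarOperator

section Picone

def piconeTerm (r : ℝ) (z z' : ℂ) : ℝ := r * Complex.normSq z - (z' * conj z).re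

theorem piconeTerm_mul_left {ω : ℂ} (hω : ‖ω‖ = 1) (r : ℝ) (z z' : ℂ) :
    piconeTerm r (ω * z) (ω * z') = piconeTerm r z z' := by
  have hω' : ω * conj ω = 1 := by
    rw [Complex.mul_conj, Complex.normSq_eq_norm_sq, hω]; simp
  simp only [piconeTerm, Complex.normSq_eq_norm_sq ω, hω, map_mul]
  rw [show ω * z' * (conj ω * conj z) = (ω * conj ω) * (z' * conj z) by ring, hω']
  simp

theorem hasDerivAt_piconeTerm {u u' : ℝ → ℝ} {u'' : ℝ} {z z' : ℝ → ℂ} {z'' : ℂ} {t : ℝ}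
    (hu : HasDerivAt u (u' t) t) (hu' : HasDerivAt u' u'' t) (hu0 : u t ≠ 0)
    (hz : HasDerivAt z (z' t) t) (hz' : HasDerivAt z' z'' t) :
    HasDerivAt (fun s => piconeTerm (u' s / u s) (z s) (z' s))
      (((-z'' + (u'' / u t : ℝ) * z t) * conj (z t)).re
        - Complex.normSq (z' t - (u' t / u t : ℝ) * z t)) t := by
  have hr : HasDerivAt (fun s => ((u' s / u s : ℝ) : ℂ))
      (((u'' * u t - u' t * u' t) / u t ^ 2 : ℝ) : ℂ) t := (hu'.div hu hu0).ofReal_comp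
  have hG : HasDerivAt
      (fun s => (((u' s / u s : ℝ) : ℂ) * (z s * conj (z s)) - z' s * conj (z s)).re)
      ((((u'' * u t - u' t * u' t) / u t ^ 2 : ℝ) : ℂ) * (z t * conj (z t))
        + ((u' t / u t : ℝ) : ℂ) * (z' t * conj (z t) + z t * conj (z' t))
        - (z'' * conj (z t) + z' t * conj (z' t))).re t :=
    Complex.reCLM.hasFDerivAt.comp_hasDerivAt t ((hr.mul (hz.mul hz.star)).sub (hz'.mul hz.star))
  convert hG using 1
  · ext s
    simp [piconeTerm, Complex.mul_conj]
  · rw [← Complex.ofReal_re (Complex.normSq _), ← Complex.mul_conj, ← Complex.sub_re]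
    congr 1
    have hu0' : (u t : ℂ) ≠ 0 := mod_cast hu0
    simp only [map_sub, map_mul, Complex.conj_ofReal]
    push_cast
    field_simp
    ring

variable {ι : Type*} [Fintype ι]

/-- `u'/u` for the ground state `u = 1 + e cos`. -/
def piconeRatio (e s : ℝ) : ℝ := -(e * Real.sin s) / (1 + e * Real.cos s)

def piconePotential (e : ℝ) (z z' : ℝ → ι → ℂ) (s : ℝ) : ℝ :=
  ∑ j, piconeTerm (piconeRatio e s) (z s j) (z' s j)

def piconeEnergy (δ e : ℝ) (z z' : ℝ → ι → ℂ) (s : ℝ) : ℝ :=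
  ∑ j, (Complex.normSq (z' s j - piconeRatio e s * z s j)
    + (δ - 1) / (1 + e * Real.cos s) * Complex.normSq (z s j))

theorem hasDerivAt_piconePotential {δ e t : ℝ} (he : |e| < 1) {z z' : ℝ → ι → ℂ}
    {z'' : ι → ℂ} (hz : HasDerivAt z (z' t) t) (hz' : HasDerivAt z' z'' t) :
    HasDerivAt (piconePotential e z z')
      ((∑ j, (-(z'' j) + ((δ / (1 + e * Real.cos t) - 1 : ℝ) : ℂ) * z t j) * conj (z t j)).re
        - piconeEnergy δ e z z' t) t := by
  have hu : HasDerivAt (fun s => 1 + e * Real.cos s) (-(e * Real.sin t)) t := by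
    simpa using ((hasDerivAt_cos t).const_mul e).const_add 1
  have hu' : HasDerivAt (fun s => -(e * Real.sin s)) (-(e * Real.cos t)) t :=
    ((hasDerivAt_sin t).const_mul e).neg
  have hterm := fun j (_ : j ∈ Finset.univ) => hasDerivAt_piconeTerm hu hu'
    (one_add_mul_cos_pos he t).ne' (hasDerivAt_pi.mp hz j) (hasDerivAt_pi.mp hz' j)
  refine (HasDerivAt.fun_sum hterm).congr_deriv ?_
  rw [Complex.re_sum, piconeEnergy, ← Finset.sum_sub_distrib]
  refine Finset.sum_congr rfl fun j _ => ?_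
  have hsplit : δ / (1 + e * Real.cos t) - 1
      = -(e * Real.cos t) / (1 + e * Real.cos t) + (δ - 1) / (1 + e * Real.cos t) := by
    field_simp [(one_add_mul_cos_pos he t).ne']
    ring
  have hre (w z : ℂ) (c₁ c₂ : ℝ) : ((w + ((c₁ + c₂ : ℝ) : ℂ) * z) * conj z).re
      = ((w + c₁ * z) * conj z).re + c₂ * Complex.normSq z := by
    simp [Complex.normSq_apply]
    ring
  rw [hsplit, hre, piconeRatio]
  ring

theorem piconePotential_two_pi {e : ℝ} {ω : ℂ} (hω : ‖ω‖ = 1) {z z' : ℝ → ι → ℂ}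
    (hz : z (2 * π) = ω • z 0) (hz' : z' (2 * π) = ω • z' 0) :
    piconePotential e z z' (2 * π) = piconePotential e z z' 0 := by
  simp [piconePotential, hz, hz', piconeTerm_mul_left hω, piconeRatio]

theorem piconeEnergy_nonneg {δ e : ℝ} (hδ : 1 ≤ δ) (he : |e| < 1) (z z' : ℝ → ι → ℂ) (s : ℝ) :
    0 ≤ piconeEnergy δ e z z' s :=
  Finset.sum_nonneg fun j _ => add_nonneg (Complex.normSq_nonneg _) <|
    mul_nonneg (div_nonneg (by linarith) (one_add_mul_cos_pos he s).le) (Complex.normSq_nonneg _)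

theorem piconeEnergy_pos {δ e : ℝ} (hδ : 1 < δ) (he : |e| < 1) {z z' : ℝ → ι → ℂ} {s : ℝ}
    (hz : z s ≠ 0) : 0 < piconeEnergy δ e z z' s := by
  obtain ⟨j, hj⟩ := Function.ne_iff.mp hz
  have hu := one_add_mul_cos_pos he s
  refine Finset.sum_pos' (fun i _ => ?_) ⟨j, Finset.mem_univ j, ?_⟩
  · exact add_nonneg (Complex.normSq_nonneg _)
      (mul_nonneg (div_nonneg (by linarith) hu.le) (Complex.normSq_nonneg _))
  · exact add_pos_of_nonneg_of_pos (Complex.normSq_nonneg _)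
      (mul_pos (div_pos (by linarith) hu) (Complex.normSq_pos.mpr hj))

theorem continuous_piconeEnergy {δ e : ℝ} (he : |e| < 1) {z z' : ℝ → ι → ℂ} (hz : Continuous z)
    (hz' : Continuous z') : Continuous (piconeEnergy δ e z z') := by
  unfold piconeEnergy piconeRatio
  fun_prop (disch := exact fun s => (one_add_mul_cos_pos he s).ne')

end Picone

/-- `R(θ) = exp (θ J₂)`. -/
def rot (θ : ℝ) : Matrix (Fin 2) (Fin 2) ℂ :=
  !![(Real.cos θ : ℂ), -(Real.sin θ : ℂ); (Real.sin θ : ℂ), (Real.cos θ : ℂ)]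

def rotFrame (v : ℝ → Fin 2 → ℂ) (s : ℝ) : Fin 2 → ℂ := rot s *ᵥ v s

theorem rot_zero : rot 0 = 1 := by
  ext i j; fin_cases i <;> fin_cases j <;> simp [rot]

theorem rot_two_pi : rot (2 * π) = 1 := by
  ext i j; fin_cases i <;> fin_cases j <;> simp [rot]

theorem rot_neg_mul_rot (θ : ℝ) : rot (-θ) * rot θ = 1 := by
  have h : ((Real.sin θ : ℂ)) ^ 2 + (Real.cos θ : ℂ) ^ 2 = 1 := mod_cast Real.sin_sq_add_cos_sq θ
  ext i j; fin_cases i <;> fin_cases j <;>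
    simp [rot, mul_apply, Fin.sum_univ_two, -Complex.ofReal_cos, -Complex.ofReal_sin]
  · linear_combination h
  · ring
  · ring
  · linear_combination h

theorem rot_mulVec_ne_zero (θ : ℝ) {a : Fin 2 → ℂ} (ha : a ≠ 0) : rot θ *ᵥ a ≠ 0 := by
  intro h
  apply ha
  simpa only [mulVec_mulVec, rot_neg_mul_rot, one_mulVec, mulVec_zero] using
    congrArg (rot (-θ) *ᵥ ·) h

theorem hasDerivAt_rotFrame {v : ℝ → Fin 2 → ℂ} {v' : Fin 2 → ℂ} {t : ℝ}
    (hv : HasDerivAt v v' t) : HasDerivAt (rotFrame v) (rot t *ᵥ (v' + J₂ *ᵥ v t)) t := by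
  have hcos := (Real.hasDerivAt_cos t).ofReal_comp
  have hsin := (Real.hasDerivAt_sin t).ofReal_comp
  have hv0 := (hasDerivAt_pi.mp hv) 0
  have hv1 := (hasDerivAt_pi.mp hv) 1
  refine hasDerivAt_pi.mpr fun i => ?_
  fin_cases i
  · convert (hcos.mul hv0).sub (hsin.mul hv1) using 1
    · ext s; simp [rotFrame, rot, mulVec, dotProduct, Fin.sum_univ_two]; ring
    · simp [rot, mulVec, dotProduct, Fin.sum_univ_two]; ring
  · convert (hsin.mul hv0).add (hcos.mul hv1) using 1
    · ext s; simp [rotFrame, rot, mulVec, dotProduct, Fin.sum_univ_two]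
    · simp [rot, mulVec, dotProduct, Fin.sum_univ_two]; ring

theorem sum_rot_mulVec_mul_conj (θ : ℝ) (a b : Fin 2 → ℂ) :
    ∑ i, (rot θ *ᵥ a) i * conj ((rot θ *ᵥ b) i) = ∑ i, a i * conj (b i) := by
  have h : ((Real.sin θ : ℂ)) ^ 2 + (Real.cos θ : ℂ) ^ 2 = 1 := mod_cast Real.sin_sq_add_cos_sq θ
  simp [rot, mulVec, dotProduct, Fin.sum_univ_two, -Complex.ofReal_cos, -Complex.ofReal_sin]
  linear_combination (a 0 * conj (b 0) + a 1 * conj (b 1)) * h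

/-- `R(θ) (-d² - 2 J₂ d + k) R(θ)ᵀ = -d² - 1 + k`, read off at `z = R y`, `z' = R (y' + J₂ y)`,
`z'' = R (y'' + J₂ y' + J₂ (y' + J₂ y))`. -/
theorem sum_planar_mul_conj_eq_sum_rot (θ k : ℝ) (a b c : Fin 2 → ℂ) :
    ∑ i, (-(c i) - 2 * (J₂ *ᵥ b) i + k * a i) * conj (a i)
      = ∑ j, (-(rot θ *ᵥ (c + J₂ *ᵥ b + J₂ *ᵥ (b + J₂ *ᵥ a))) j
          + ((k - 1 : ℝ) : ℂ) * (rot θ *ᵥ a) j) * conj ((rot θ *ᵥ a) j) := by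
  rw [← sum_rot_mulVec_mul_conj θ _ a]
  congr 1; ext j; congr 1
  fin_cases j <;> simp [rot, mulVec, dotProduct, Fin.sum_univ_two, vecHead, vecTail] <;> ring

theorem continuous_rotFrame {v : ℝ → Fin 2 → ℂ} (hv : Continuous v) : Continuous (rotFrame v) := by
  unfold rotFrame rot
  fun_prop

theorem rotFrame_two_pi {v : ℝ → Fin 2 → ℂ} {ω : ℂ} (hv : v (2 * π) = ω • v 0) :
    rotFrame v (2 * π) = ω • rotFrame v 0 := by
  simp [rotFrame, rot_zero, rot_two_pi, hv]

theorem hasDerivAt_piconePotential_rotFrame {δ e t : ℝ} (he : |e| < 1)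
    {y y' : ℝ → Fin 2 → ℂ} {y'' : Fin 2 → ℂ}
    (hy : HasDerivAt y (y' t) t) (hy' : HasDerivAt y' y'' t) :
    HasDerivAt (piconePotential e (rotFrame y) (rotFrame fun s => y' s + J₂ *ᵥ y s))
      ((∑ i, (-(y'' i) - 2 * (J₂ *ᵥ y' t) i + ((δ / (1 + e * Real.cos t) : ℝ) : ℂ) * y t i)
          * conj (y t i)).re
        - piconeEnergy δ e (rotFrame y) (rotFrame fun s => y' s + J₂ *ᵥ y s) t) t :=
  sum_planar_mul_conj_eq_sum_rot t _ (y t) (y' t) y'' ▸ hasDerivAt_piconePotential he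
    (hasDerivAt_rotFrame hy) (hasDerivAt_rotFrame (hy'.add (hy.const_mulVec J₂)))

end PlanarOperator

open PlanarOperator

/-- for `δ > 1`, `e ∈ [0,1)` and `|ω| = 1`, the operator
`-(d²/dθ²)I₂ - 2J₂ d/dθ + δ I₂/(1 + e cos θ)` is strictly positive on `D̄₂(ω,2π)`. -/
theorem planar_operator_positive (δ e : ℝ) (hδ : 1 < δ) (he0 : 0 ≤ e) (he1 : e < 1)
    (ω : ℂ) (hω : ‖ω‖ = 1)
    (y : ℝ → Fin 2 → ℂ) (hy : ContDiff ℝ 2 y)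
    (hbc : y (2 * π) = ω • y 0)
    (hbc' : deriv y (2 * π) = ω • deriv y 0)
    (hne : ∃ θ ∈ Set.Icc (0:ℝ) (2 * π), y θ ≠ 0) :
    0 < (∫ θ in (0:ℝ)..(2 * π), ∑ i : Fin 2,
      (-(deriv (deriv y) θ i)
        - 2 * ((!![0, -1; 1, 0] : Matrix (Fin 2) (Fin 2) ℂ).mulVec (deriv y θ)) i
        + (δ / (1 + e * Real.cos θ) : ℝ) * y θ i)
          * (starRingEnd ℂ) (y θ i)).re := by
  obtain ⟨θ₀, hθ₀, hyθ₀⟩ := hne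
  have he : |e| < 1 := abs_lt.mpr ⟨by linarith, he1⟩
  have hy' : ContDiff ℝ 1 (deriv y) := hy.deriv' (n := 1)
  have hy1 t : HasDerivAt y (deriv y t) t := (hy.differentiable two_ne_zero t).hasDerivAt
  have hy2 t : HasDerivAt (deriv y) (deriv (deriv y) t) t :=
    (hy'.differentiable one_ne_zero t).hasDerivAt
  have hF : Continuous fun θ => ∑ i : Fin 2, (-(deriv (deriv y) θ i) - 2 * (J₂ *ᵥ deriv y θ) i
      + ((δ / (1 + e * Real.cos θ) : ℝ) : ℂ) * y θ i) * conj (y θ i) := by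
    have hy₀ := hy.continuous
    have hy₁ := hy'.continuous
    have hy₂ := hy'.continuous_deriv_one
    fun_prop (disch := exact fun s => (one_add_mul_cos_pos he s).ne')
  set z := rotFrame y
  set z' := rotFrame fun s => deriv y s + J₂ *ᵥ y s
  have hΦ t := hasDerivAt_piconePotential_rotFrame (δ := δ) he (hy1 t) (hy2 t)
  have hE : Continuous (piconeEnergy δ e z z') := continuous_piconeEnergy he
    (continuous_rotFrame hy.continuous) (continuous_rotFrame (by fun_prop))
  have hbdry : piconePotential e z z' (2 * π) = piconePotential e z z' 0 :=
    piconePotential_two_pi hω (rotFrame_two_pi hbc)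
      (rotFrame_two_pi (by simp only [hbc, hbc', mulVec_smul, smul_add]))
  calc 0 < ∫ θ in (0:ℝ)..(2 * π), piconeEnergy δ e z z' θ :=
        intervalIntegral_pos_of_continuous_of_nonneg two_pi_pos hE
          (piconeEnergy_nonneg hδ.le he z z') hθ₀
          (piconeEnergy_pos hδ he (rot_mulVec_ne_zero θ₀ hyθ₀))
    _ = _ := (intervalIntegral_eq_of_hasDerivAt_sub (Complex.continuous_re.comp hF) hE hΦ
          hbdry.symm).symm
    _ = _ := intervalIntegral.intervalIntegral_re (hF.intervalIntegrable _ _)
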